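/- (Theorem 3, maximum value) Let 0 < r_1 < r_2 < r_3 and let t be the unique positive real root of the cubic equation 2 r_1 r_2 r_3 t³ + (r_1² r_2² + r_2² r_3² + r_3² r_1²) t² − r_1² r_2² r_3² = 0. Then the maximum of the perimeter L over all configurations (α_1, α_2, α_3) equals L_M = √(r_1² + r_2² + 2 t r_1 r_2 / r_3) + √(r_1² + r_3² + 2 t r_1 r_3 / r_2) + √(r_2² + r_3² + 2 t r_2 r_3 / r_1). -/

import Mathlib

/-!
The extremal triangle has the origin as its incenter and `t` as its inradius: its vertex angles at
the origin have cosines `-t / r₃`, `-t / r₁`, `-t / r₂`, and the cubic says exactly that these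
angles add up to `2π`. Let `a, b, c` be its sides (`a` opposite the vertex on the first circle).
For any vectors `p, q, r` the weighted Lagrange identity
`ab‖p - q‖² + bc‖q - r‖² + ca‖r - p‖² + ‖a p + b q + c r‖² = (a + b + c)(a‖p‖² + b‖q‖² + c‖r‖²)`
together with the incenter identity `a r₁² + b r₂² + c r₃² = abc` gives
`‖p - q‖² / c + ‖q - r‖² / a + ‖r - p‖² / b ≤ a + b + c` on every configuration, and
`d ≤ (d² / ℓ + ℓ) / 2` turns this into the bound on the perimeter.
-/

open Real

/-- Length of the chordal segment between points at radii `r`, `r'` whose polar angles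
differ by `θ`. -/
noncomputable def ell (r r' θ : ℝ) : ℝ :=
  Real.sqrt (r ^ 2 + r' ^ 2 - 2 * r * r' * Real.cos θ)

/-- The perimeter `L = |p₁ − p₂| + |p₂ − p₃| + |p₃ − p₁|` of the connecting cycle for three
concentric circles of radii `r1, r2, r3` with vertices at polar angles `a1, a2, a3`. -/
noncomputable def L3full (r1 r2 r3 a1 a2 a3 : ℝ) : ℝ :=
  ell r1 r2 (a2 - a1) + ell r2 r3 (a3 - a2) + ell r3 r1 (a1 - a3)

theorem Finset.sum_le_sum_of_sum_sq_div_le {ι : Type*} (s : Finset ι) (d l : ι → ℝ)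
    (hl : ∀ i ∈ s, 0 < l i) (h : ∑ i ∈ s, d i ^ 2 / l i ≤ ∑ i ∈ s, l i) :
    ∑ i ∈ s, d i ≤ ∑ i ∈ s, l i := by
  have hterm : ∀ i ∈ s, d i ≤ (d i ^ 2 / l i + l i) / 2 := fun i hi => by
    have := hl i hi
    rw [le_div_iff₀ two_pos, div_add' _ _ _ this.ne', le_div_iff₀ this]
    nlinarith [sq_nonneg (d i - l i)]
  calc ∑ i ∈ s, d i ≤ ∑ i ∈ s, (d i ^ 2 / l i + l i) / 2 := Finset.sum_le_sum hterm
    _ = (∑ i ∈ s, d i ^ 2 / l i + ∑ i ∈ s, l i) / 2 := by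
      rw [← Finset.sum_div, Finset.sum_add_distrib]
    _ ≤ ∑ i ∈ s, l i := by linarith

section InnerProductSpace

variable {E : Type*} [NormedAddCommGroup E] [InnerProductSpace ℝ E]

theorem weighted_norm_sub_sq_add_norm_sq (a b c : ℝ) (p q r : E) :
    a * b * ‖p - q‖ ^ 2 + b * c * ‖q - r‖ ^ 2 + c * a * ‖r - p‖ ^ 2 + ‖a • p + b • q + c • r‖ ^ 2
      = (a + b + c) * (a * ‖p‖ ^ 2 + b * ‖q‖ ^ 2 + c * ‖r‖ ^ 2) := by
  simp only [← real_inner_self_eq_norm_sq, inner_add_left, inner_add_right, inner_sub_left,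
    inner_sub_right, real_inner_smul_left, real_inner_smul_right, real_inner_comm p q,
    real_inner_comm p r, real_inner_comm q r]
  ring

theorem perimeter_le_of_weighted_norm_sq_le {a b c : ℝ} {p q r : E} (ha : 0 < a) (hb : 0 < b)
    (hc : 0 < c) (h : a * ‖p‖ ^ 2 + b * ‖q‖ ^ 2 + c * ‖r‖ ^ 2 ≤ a * b * c) :
    ‖p - q‖ + ‖q - r‖ + ‖r - p‖ ≤ c + a + b := by
  have hsq : a * b * ‖p - q‖ ^ 2 + b * c * ‖q - r‖ ^ 2 + c * a * ‖r - p‖ ^ 2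
      ≤ (a + b + c) * (a * b * c) := by
    nlinarith [weighted_norm_sub_sq_add_norm_sq a b c p q r, sq_nonneg ‖a • p + b • q + c • r‖]
  have hdiv : ‖p - q‖ ^ 2 / c + ‖q - r‖ ^ 2 / a + ‖r - p‖ ^ 2 / b ≤ c + a + b := by
    rw [div_add_div _ _ hc.ne' ha.ne', div_add_div _ _ (by positivity) hb.ne',
      div_le_iff₀ (by positivity)]
    linarith
  simpa [Fin.sum_univ_three] using Finset.sum_le_sum_of_sum_sq_div_le Finset.univ
    ![‖p - q‖, ‖q - r‖, ‖r - p‖] ![c, a, b] (by simp [Fin.forall_fin_succ, ha, hb, hc])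
    (by simpa [Fin.sum_univ_three] using hdiv)

end InnerProductSpace

theorem norm_sub_polar_sq (r r' α β : ℝ) :
    ‖(r : ℂ) * Complex.exp (α * Complex.I) - r' * Complex.exp (β * Complex.I)‖ ^ 2
      = r ^ 2 + r' ^ 2 - 2 * r * r' * cos (β - α) := by
  rw [Complex.sq_norm, Complex.normSq_apply]
  simp only [Complex.sub_re, Complex.sub_im, Complex.re_ofReal_mul, Complex.im_ofReal_mul,
    Complex.exp_ofReal_mul_I_re, Complex.exp_ofReal_mul_I_im, cos_sub]
  linear_combination r ^ 2 * sin_sq_add_cos_sq α + r' ^ 2 * sin_sq_add_cos_sq β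

theorem ell_eq_norm_sub (r r' α β : ℝ) :
    ell r r' (β - α) =
      ‖(r : ℂ) * Complex.exp (α * Complex.I) - r' * Complex.exp (β * Complex.I)‖ := by
  rw [ell, ← norm_sub_polar_sq, sqrt_sq (norm_nonneg _)]

theorem le_one_of_sq_add_sq_add_sq_add_mul {x y z : ℝ} (hx : 0 ≤ x) (hy : 0 ≤ y) (hz : 0 ≤ z)
    (h : x ^ 2 + y ^ 2 + z ^ 2 + 2 * x * y * z = 1) : x ≤ 1 := by
  nlinarith [mul_nonneg (mul_nonneg hx hy) hz]

theorem cos_arccos_neg_add_arccos_neg {x y z : ℝ} (hx : 0 ≤ x) (hy : 0 ≤ y) (hz : 0 ≤ z)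
    (h : x ^ 2 + y ^ 2 + z ^ 2 + 2 * x * y * z = 1) :
    cos (arccos (-x) + arccos (-y)) = -z := by
  have hx1 := le_one_of_sq_add_sq_add_sq_add_mul hx hy hz h
  have hy1 := le_one_of_sq_add_sq_add_sq_add_mul hy hx hz (by linear_combination h)
  have hsin : √(1 - (-x) ^ 2) * √(1 - (-y) ^ 2) = x * y + z := by
    rw [← sqrt_mul (by nlinarith), show (1 - (-x) ^ 2) * (1 - (-y) ^ 2) = (x * y + z) ^ 2 by
      linear_combination -h, sqrt_sq (by positivity)]
  rw [cos_add, cos_arccos (by linarith) (by linarith), cos_arccos (by linarith) (by linarith),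
    sin_arccos, sin_arccos, hsin]
  ring

section Incircle

variable {x y z t : ℝ}

theorem incircle_side_mul (hx : 0 < x) (hy : 0 < y) (hz : 0 < z) (ht : 0 < t)
    (hroot : 2 * x * y * z * t ^ 3 + (x ^ 2 * y ^ 2 + y ^ 2 * z ^ 2 + z ^ 2 * x ^ 2) * t ^ 2 -
      x ^ 2 * y ^ 2 * z ^ 2 = 0)
    {u v : ℝ} (hu : 0 ≤ u) (hv : 0 ≤ v) (hu2 : u ^ 2 = y ^ 2 + z ^ 2 + 2 * t * y * z / x)
    (hv2 : v ^ 2 = x ^ 2 + z ^ 2 + 2 * t * x * z / y) :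
    t * (u * v) = z * (x * y + t * z) := by
  rw [← sq_eq_sq₀ (by positivity) (by positivity), mul_pow, mul_pow, hu2, hv2]
  field_simp
  linear_combination (2 * z * t + x * y) * hroot

theorem incircle_sides_identity (hx : 0 < x) (hy : 0 < y) (hz : 0 < z) (ht : 0 < t)
    (hroot : 2 * x * y * z * t ^ 3 + (x ^ 2 * y ^ 2 + y ^ 2 * z ^ 2 + z ^ 2 * x ^ 2) * t ^ 2 -
      x ^ 2 * y ^ 2 * z ^ 2 = 0)
    {a b c : ℝ} (ha : 0 ≤ a) (hb : 0 ≤ b) (hc : 0 ≤ c)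
    (ha2 : a ^ 2 = y ^ 2 + z ^ 2 + 2 * t * y * z / x)
    (hb2 : b ^ 2 = x ^ 2 + z ^ 2 + 2 * t * x * z / y)
    (hc2 : c ^ 2 = x ^ 2 + y ^ 2 + 2 * t * x * y / z) :
    a * x ^ 2 + b * y ^ 2 + c * z ^ 2 = a * b * c := by
  have hab := incircle_side_mul hx hy hz ht hroot ha hb ha2 hb2
  have hac := incircle_side_mul hx hz hy ht (by linear_combination hroot) ha hc
    (by rw [ha2]; ring) (by rw [hc2])
  have hbc := incircle_side_mul hy hz hx ht (by linear_combination hroot) hb hc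
    (by rw [hb2]; ring) (by rw [hc2]; ring)
  have ha0 : a ≠ 0 := by
    rintro rfl
    have : 0 < y ^ 2 + z ^ 2 + 2 * t * y * z / x := by positivity
    linarith [ha2]
  have hxa2 : x * a ^ 2 = x * (y ^ 2 + z ^ 2) + 2 * t * y * z := by rw [ha2]; field_simp
  apply mul_left_cancel₀ (mul_ne_zero ht.ne' ha0)
  linear_combination y ^ 2 * hab + z ^ 2 * hac - a ^ 2 * hbc - y * z * hxa2

theorem L3full_incircle_config (hx : 0 < x) (hy : 0 < y) (hz : 0 < z) (ht : 0 < t)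
    (hroot : 2 * x * y * z * t ^ 3 + (x ^ 2 * y ^ 2 + y ^ 2 * z ^ 2 + z ^ 2 * x ^ 2) * t ^ 2 -
      x ^ 2 * y ^ 2 * z ^ 2 = 0) :
    L3full x y z 0 (arccos (-(t / z))) (arccos (-(t / z)) + arccos (-(t / x))) =
      √(x ^ 2 + y ^ 2 + 2 * t * x * y / z) + √(x ^ 2 + z ^ 2 + 2 * t * x * z / y) +
        √(y ^ 2 + z ^ 2 + 2 * t * y * z / x) := by
  have hs : (t / z) ^ 2 + (t / y) ^ 2 + (t / x) ^ 2 + 2 * (t / z) * (t / y) * (t / x) = 1 := by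
    field_simp
    linear_combination hroot
  have hx0 : 0 ≤ t / x := by positivity
  have hy0 : 0 ≤ t / y := by positivity
  have hz0 : 0 ≤ t / z := by positivity
  have hz1 := le_one_of_sq_add_sq_add_sq_add_mul hz0 hy0 hx0 hs
  have hx1 := le_one_of_sq_add_sq_add_sq_add_mul hx0 hy0 hz0 (by linear_combination hs)
  simp only [L3full, ell, sub_zero, add_sub_cancel_left, zero_sub, cos_neg]
  rw [cos_arccos (by linarith) (by linarith), cos_arccos (by linarith) (by linarith),
    cos_arccos_neg_add_arccos_neg hz0 hx0 hy0 (by linear_combination hs), add_right_comm]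
  congr 3 <;> field_simp <;> ring

theorem L3full_le_of_incircle (hx : 0 < x) (hy : 0 < y) (hz : 0 < z) (ht : 0 < t)
    (hroot : 2 * x * y * z * t ^ 3 + (x ^ 2 * y ^ 2 + y ^ 2 * z ^ 2 + z ^ 2 * x ^ 2) * t ^ 2 -
      x ^ 2 * y ^ 2 * z ^ 2 = 0) (α β γ : ℝ) :
    L3full x y z α β γ ≤
      √(x ^ 2 + y ^ 2 + 2 * t * x * y / z) + √(x ^ 2 + z ^ 2 + 2 * t * x * z / y) +
        √(y ^ 2 + z ^ 2 + 2 * t * y * z / x) := by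
  have hsides := incircle_sides_identity hx hy hz ht hroot (sqrt_nonneg _) (sqrt_nonneg _)
    (sqrt_nonneg _) (sq_sqrt (by positivity)) (sq_sqrt (by positivity)) (sq_sqrt (by positivity))
  have hperim := perimeter_le_of_weighted_norm_sq_le
    (p := (x : ℂ) * Complex.exp (α * Complex.I)) (q := (y : ℂ) * Complex.exp (β * Complex.I))
    (r := (z : ℂ) * Complex.exp (γ * Complex.I)) (a := √(y ^ 2 + z ^ 2 + 2 * t * y * z / x))
    (b := √(x ^ 2 + z ^ 2 + 2 * t * x * z / y)) (c := √(x ^ 2 + y ^ 2 + 2 * t * x * y / z))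
    (sqrt_pos.2 (by positivity)) (sqrt_pos.2 (by positivity)) (sqrt_pos.2 (by positivity))
    (by simpa [abs_of_pos hx, abs_of_pos hy, abs_of_pos hz] using hsides.le)
  rw [L3full, ell_eq_norm_sub, ell_eq_norm_sub, ell_eq_norm_sub]
  linarith

end Incircle

/-- Theorem 3, maximum value: for `0 < r1 < r2 < r3`, if `t` is the (unique)
positive real root of `2 r1 r2 r3 t³ + (r1² r2² + r2² r3² + r3² r1²) t² − r1² r2² r3² = 0`,
then the maximum of the perimeter over all configurations equals
`√(r1² + r2² + 2 t r1 r2/r3) + √(r1² + r3² + 2 t r1 r3/r2) + √(r2² + r3² + 2 t r2 r3/r1)`. -/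
theorem stmt_11 (r1 r2 r3 : ℝ) (h1 : 0 < r1) (h12 : r1 < r2) (h23 : r2 < r3)
    (t : ℝ) (ht : 0 < t)
    (hroot : 2 * r1 * r2 * r3 * t ^ 3 +
      (r1 ^ 2 * r2 ^ 2 + r2 ^ 2 * r3 ^ 2 + r3 ^ 2 * r1 ^ 2) * t ^ 2 -
      r1 ^ 2 * r2 ^ 2 * r3 ^ 2 = 0) :
    IsGreatest (Set.range fun q : ℝ × ℝ × ℝ => L3full r1 r2 r3 q.1 q.2.1 q.2.2)
      (Real.sqrt (r1 ^ 2 + r2 ^ 2 + 2 * t * r1 * r2 / r3) +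
       Real.sqrt (r1 ^ 2 + r3 ^ 2 + 2 * t * r1 * r3 / r2) +
       Real.sqrt (r2 ^ 2 + r3 ^ 2 + 2 * t * r2 * r3 / r1)) := by
  have h2 : 0 < r2 := h1.trans h12
  have h3 : 0 < r3 := h2.trans h23
  refine ⟨⟨(0, arccos (-(t / r3)), arccos (-(t / r3)) + arccos (-(t / r1))),
    L3full_incircle_config h1 h2 h3 ht hroot⟩, ?_⟩
  rintro _ ⟨⟨a1, a2, a3⟩, rfl⟩
  exact L3full_le_of_incircle h1 h2 h3 ht hroot a1 a2 a3
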